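/- Let f : ℝ → ℝ be strictly monotone and suppose there exists h ≥ 1 such that for all a ∈ ℝ and t > 0, h⁻¹ ≤ |f(a+t) − f(a)| / |f(a) − f(a−t)| ≤ h (the h-condition). Then f is unbounded above or below; in fact f(ℝ) cannot be contained in any bounded interval. -/

import Mathlib

/-!
Replacing `f` by `-f` if necessary, assume `f` is increasing. The lower half of the
`h`-condition at the point `t` with step `t` reads `f (2t) - f t ≥ h⁻¹ (f t - f 0)`, so `f (2t) - f 0 ≥ (1 + h⁻¹) (f t - f 0)`.
Iterating from `t = 1` gives `f (2ⁿ) - f 0 ≥ (1 + h⁻¹)ⁿ (f 1 - f 0)`, which tends to infinity.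
-/

def HCondition (h : ℝ) (f : ℝ → ℝ) : Prop :=
  ∀ a t : ℝ, 0 < t →
    h⁻¹ ≤ |f (a + t) - f a| / |f a - f (a - t)| ∧
    |f (a + t) - f a| / |f a - f (a - t)| ≤ h

namespace HCondition

variable {h : ℝ} {f : ℝ → ℝ}

theorem neg (hf : HCondition h f) : HCondition h (-f) := by
  intro a t ht
  simpa only [Pi.neg_apply, neg_sub_neg, abs_sub_comm] using hf a t ht

theorem mul_sub_le_sub_of_strictMono (hf : HCondition h f) (hmono : StrictMono f) {t : ℝ}
    (ht : 0 < t) : h⁻¹ * (f t - f 0) ≤ f (t + t) - f t := by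
  have hlow := (hf t t ht).1
  have hpos : 0 < f t - f 0 := sub_pos.mpr (hmono ht)
  rwa [sub_self, abs_of_pos hpos, abs_of_pos (sub_pos.mpr (hmono (by linarith))),
    le_div_iff₀ hpos] at hlow

end HCondition

section Doubling

variable {f : ℝ → ℝ} {k : ℝ}

theorem pow_mul_le_sub_of_doubling (hk : 0 ≤ 1 + k)
    (hdouble : ∀ t : ℝ, 0 < t → k * (f t - f 0) ≤ f (t + t) - f t) (n : ℕ) :
    (1 + k) ^ n * (f 1 - f 0) ≤ f (2 ^ n) - f 0 := by
  induction n with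
  | zero => simp
  | succ n ih =>
    have hstep := hdouble (2 ^ n) (by positivity)
    calc (1 + k) ^ (n + 1) * (f 1 - f 0) = (1 + k) * ((1 + k) ^ n * (f 1 - f 0)) := by ring
      _ ≤ (1 + k) * (f (2 ^ n) - f 0) := mul_le_mul_of_nonneg_left ih hk
      _ ≤ f (2 ^ n + 2 ^ n) - f 0 := by linarith
      _ = f (2 ^ (n + 1)) - f 0 := by rw [pow_succ, mul_two]

theorem not_bddAbove_range_of_doubling (hk : 0 < k) (h01 : f 0 < f 1)
    (hdouble : ∀ t : ℝ, 0 < t → k * (f t - f 0) ≤ f (t + t) - f t) :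
    ¬ BddAbove (Set.range f) := by
  rintro ⟨M, hM⟩
  have h01' : 0 < f 1 - f 0 := sub_pos.mpr h01
  obtain ⟨n, hn⟩ := pow_unbounded_of_one_lt ((M - f 0) / (f 1 - f 0)) (lt_add_of_pos_right 1 hk)
  rw [div_lt_iff₀ h01'] at hn
  have hgrowth := pow_mul_le_sub_of_doubling (by linarith) hdouble n
  have hbound : f (2 ^ n) ≤ M := hM ⟨2 ^ n, rfl⟩
  linarith

end Doubling

theorem HCondition.not_bddAbove_range {h : ℝ} {f : ℝ → ℝ} (hf : HCondition h f) (hh : 0 < h)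
    (hmono : StrictMono f) : ¬ BddAbove (Set.range f) :=
  not_bddAbove_range_of_doubling (inv_pos.mpr hh) (hmono one_pos)
    fun _ ht => hf.mul_sub_le_sub_of_strictMono hmono ht

/-- A strictly monotone function on ℝ satisfying the `h`-condition (quasisymmetry on the line)
has image contained in no bounded interval. -/
theorem h_condition_unbounded (f : ℝ → ℝ)
    (hmono : StrictMono f ∨ StrictAnti f)
    (h : ℝ) (hh : 1 ≤ h)
    (hcond : ∀ a t : ℝ, 0 < t →
      h⁻¹ ≤ |f (a + t) - f a| / |f a - f (a - t)| ∧
      |f (a + t) - f a| / |f a - f (a - t)| ≤ h) :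
    ∀ c d : ℝ, ¬ Set.range f ⊆ Set.Icc c d := by
  intro c d hsub
  have hcond : HCondition h f := hcond
  have hpos : 0 < h := by linarith
  rcases hmono with hinc | hdec
  · exact hcond.not_bddAbove_range hpos hinc (bddAbove_Icc.mono hsub)
  · refine hcond.neg.not_bddAbove_range hpos hdec.neg ⟨-c, ?_⟩
    rintro _ ⟨x, rfl⟩
    exact neg_le_neg (hsub ⟨x, rfl⟩).1
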